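/- arXiv:2410.06332 — 2 statements merged into one kernel-verified Lean document; each statement's English description precedes it below -/
import Mathlib

section
/- Every BNN representation of the parity function on n variables consists of exactly all 2^n Boolean vectors as prototypes: P is the set of vectors of odd weight and N is the set of vectors of even weight. In particular BNN(PAR_n) = 2^n. -/
/-! Every vector `a` is a prototype of its own class. Otherwise let `b ≠ a` be the
own-class prototype that beats the other class at `a`, and move `a` one step towards `b`. The
parity flips, so the neighbour `a'` has a prototype `c` of the other class with
`d(a', c) < d(a', b) = d(a, b) - 1`, whence `d(a, c) ≤ 1 + d(a', c) < d(a, b)`, contradicting the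
choice of `b`. -/

/-- The weight (number of ones) of a Boolean vector. -/
def wt {n : ℕ} (x : Fin n → Bool) : ℕ :=
  (Finset.univ.filter (fun i => x i = true)).card

/-- (P,N) is a Boolean Nearest Neighbor representation of f. -/
def IsBNN {n : ℕ} (f : (Fin n → Bool) → Bool)
    (P N : Finset (Fin n → Bool)) : Prop :=
  Disjoint P N ∧
  (∀ a, f a = true → ∃ b ∈ P, ∀ c ∈ N, hammingDist a b < hammingDist a c) ∧
  (∀ a, f a = false → ∃ b ∈ N, ∀ c ∈ P, hammingDist a b < hammingDist a c)

open Function Finset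

section Hamming

variable {ι : Type*} [Fintype ι] [DecidableEq ι] {β : ι → Type*} [∀ i, DecidableEq (β i)]

theorem hammingDist_update_self (a : ∀ i, β i) {i : ι} {v : β i} (h : v ≠ a i) :
    hammingDist a (update a i v) = 1 := by
  rw [hammingDist, card_eq_one]
  refine ⟨i, ext fun j => ?_⟩
  by_cases hj : j = i
  · subst hj; simp [h.symm]
  · simp [hj]

theorem hammingDist_update_add_one (a b : ∀ i, β i) {i : ι} (h : a i ≠ b i) :
    hammingDist (update a i (b i)) b + 1 = hammingDist a b := by
  have hmem : i ∈ univ.filter (fun j => a j ≠ b j) := by simp [h]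
  rw [hammingDist, hammingDist, ← card_erase_add_one hmem]
  congr 2
  ext j
  by_cases hj : j = i
  · subst hj; simp
  · simp [hj]

theorem mem_of_forall_update_ne {P N : Finset (∀ i, β i)} {a : ∀ i, β i}
    (ha : ∃ b ∈ P, ∀ c ∈ N, hammingDist a b < hammingDist a c)
    (hnbr : ∀ i (v : β i), v ≠ a i →
      ∃ c ∈ N, ∀ b ∈ P, hammingDist (update a i v) c < hammingDist (update a i v) b) :
    a ∈ P := by
  obtain ⟨b, hbP, hb⟩ := ha
  by_contra haP
  obtain ⟨i, hi⟩ := Function.ne_iff.mp (ne_of_mem_of_not_mem hbP haP).symm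
  set a' := update a i (b i)
  obtain ⟨c, hcN, hc⟩ := hnbr i (b i) hi.symm
  have : hammingDist a c < hammingDist a b := calc
    hammingDist a c ≤ hammingDist a a' + hammingDist a' c := hammingDist_triangle a a' c
    _ < 1 + hammingDist a' b := by
      rw [hammingDist_update_self a hi.symm]; gcongr; exact hc b hbP
    _ = hammingDist a b := by rw [add_comm, hammingDist_update_add_one a b hi]
  exact (hb c hcN).not_gt this

end Hamming

section BNN

variable {n : ℕ} {f : (Fin n → Bool) → Bool} {P N : Finset (Fin n → Bool)}
  {a : Fin n → Bool}

theorem IsBNN.mem_left (h : IsBNN f P N) (ha : f a = true)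
    (hnbr : ∀ i v, v ≠ a i → f (update a i v) = false) : a ∈ P :=
  mem_of_forall_update_ne (h.2.1 a ha) fun i v hv => h.2.2 _ (hnbr i v hv)

theorem IsBNN.mem_right (h : IsBNN f P N) (ha : f a = false)
    (hnbr : ∀ i v, v ≠ a i → f (update a i v) = true) : a ∈ N :=
  mem_of_forall_update_ne (h.2.2 a ha) fun i v hv => h.2.1 _ (hnbr i v hv)

end BNN

theorem wt_update_add {n : ℕ} (a : Fin n → Bool) (i : Fin n) (v : Bool) :
    wt (update a i v) + (if a i then 1 else 0) = wt a + (if v then 1 else 0) := by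
  let ind : Bool → ℕ := fun b => if b then 1 else 0
  have hwt : ∀ x : Fin n → Bool, wt x = ∑ j, ind (x j) := fun x => by
    simp only [wt, card_filter, ind]
  rw [hwt, hwt, sum_congr rfl fun j _ => apply_update (fun _ => ind) a i v j,
    sum_update_of_mem (mem_univ i), sum_eq_add_sum_sdiff_singleton_of_mem (mem_univ i)]
  ring

theorem wt_update_mod_two_ne {n : ℕ} (a : Fin n → Bool) {i : Fin n} {v : Bool} (h : v ≠ a i) :
    wt (update a i v) % 2 ≠ wt a % 2 := by
  have := wt_update_add a i v
  revert h this
  cases v <;> cases a i <;>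
    simp only [ne_eq, not_true_eq_false, not_false_eq_true, Bool.false_eq_true, if_true, if_false,
      forall_const, false_implies] <;> omega

theorem Finset.eq_filter_and_eq_filter_not_of_disjoint {α : Type*} [Fintype α] {P N : Finset α}
    (p : α → Prop) [DecidablePred p] (hPN : Disjoint P N) (hP : ∀ x, p x → x ∈ P)
    (hN : ∀ x, ¬p x → x ∈ N) :
    P = univ.filter p ∧ N = univ.filter (fun x => ¬p x) := by
  refine ⟨ext fun x => ?_, ext fun x => ?_⟩ <;> simp only [mem_filter, mem_univ, true_and]
  · exact ⟨fun hxP => by_contra fun hx => disjoint_left.mp hPN hxP (hN x hx), hP x⟩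
  · exact ⟨fun hxN hx => disjoint_left.mp hPN (hP x hx) hxN, hN x⟩

/-- every BNN representation of the parity function PAR_n uses all
2^n Boolean vectors as prototypes: P is exactly the odd-weight vectors, N is
exactly the even-weight vectors, and |P|+|N| = 2^n. -/
theorem parity_unique_bnn (n : ℕ) (P N : Finset (Fin n → Bool))
    (hPN : IsBNN (fun x => decide (wt x % 2 = 1)) P N) :
    P = Finset.univ.filter (fun x => wt x % 2 = 1) ∧
    N = Finset.univ.filter (fun x => wt x % 2 = 0) ∧
    P.card + N.card = 2 ^ n := by
  have hodd : ∀ a, wt a % 2 = 1 → a ∈ P := fun a ha =>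
    hPN.mem_left (by simpa using ha) fun i v hv => by
      have := wt_update_mod_two_ne a hv
      simp only [decide_eq_false_iff_not]; omega
  have heven : ∀ a, ¬wt a % 2 = 1 → a ∈ N := fun a ha =>
    hPN.mem_right (by simpa using ha) fun i v hv => by
      have := wt_update_mod_two_ne a hv
      simp only [decide_eq_true_eq]; omega
  obtain ⟨rfl, rfl⟩ := eq_filter_and_eq_filter_not_of_disjoint _ hPN.1 hodd heven
  refine ⟨rfl, filter_congr fun x _ => Nat.mod_two_ne_one, ?_⟩
  rw [card_filter_add_card_filter_not]
  simp
end

section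
/- Let f be the function on 2n Boolean variables defined by f(x)=1 iff the number of ones in x equals exactly n. Then every model of f is isolated (every Hamming neighbor of a model is a non-model), f has exactly binomial(2n, n) models, and consequently any BNN representation of f has at least binomial(2n, n) prototypes. -/
open Finset

theorem exists_hammingDist_eq_one_of_ne {ι : Type*} [Fintype ι] [DecidableEq ι]
    {β : ι → Type*} [∀ i, DecidableEq (β i)] {x b : ∀ i, β i} (hxb : x ≠ b) :
    ∃ y, hammingDist x y = 1 ∧ hammingDist y b + 1 = hammingDist x b := by
  obtain ⟨i, hi⟩ := Function.ne_iff.mp hxb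
  refine ⟨Function.update x i (b i), ?_, ?_⟩
  · have diff_eq : ({j | x j ≠ Function.update x i (b i) j} : Finset ι) = {i} := by
      ext j
      by_cases hj : j = i
      · subst hj; simp [hi]
      · simp [hj]
    simp [hammingDist, diff_eq]
  · have diff_eq : ({j | Function.update x i (b i) j ≠ b j} : Finset ι) =
        ({j | x j ≠ b j} : Finset ι).erase i := by
      ext j
      by_cases hj : j = i
      · subst hj; simp
      · simp [hj]
    rw [hammingDist, hammingDist, diff_eq, card_erase_add_one (by simp [hi])]

theorem natCast_hammingDist_eq_wt_add_wt {m : ℕ} (x y : Fin m → Bool) :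
    (hammingDist x y : ZMod 2) = wt x + wt y := by
  simp only [hammingDist, wt, card_filter, Nat.cast_sum, ← sum_add_distrib]
  refine sum_congr rfl fun i _ => ?_
  cases x i <;> cases y i <;> decide

theorem wt_ne_of_hammingDist_eq_one {m : ℕ} {x y : Fin m → Bool}
    (hxy : hammingDist x y = 1) : wt x ≠ wt y := by
  intro h
  have := natCast_hammingDist_eq_wt_add_wt x y
  rw [hxy, h, CharTwo.add_self_eq_zero, Nat.cast_one] at this
  exact one_ne_zero this

theorem card_filter_wt_eq (m k : ℕ) :
    #{x : Fin m → Bool | wt x = k} = m.choose k := by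
  refine (card_nbij' (t := powersetCard k univ) (fun x => ({i | x i = true} : Finset (Fin m)))
    (fun s i => decide (i ∈ s)) ?_ ?_ ?_ ?_).trans (by simp)
  · intro x hx
    simpa [mem_powersetCard, wt] using (mem_filter.mp hx).2
  · intro s hs
    rw [mem_coe, mem_filter]
    simpa [wt] using (mem_powersetCard.mp hs).2
  · intro x _
    funext i
    simp
  · intro s _
    ext i
    simp

def IsIsolatedModel {m : ℕ} (f : (Fin m → Bool) → Bool) (a : Fin m → Bool) : Prop :=
  f a = true ∧ ∀ y, hammingDist a y = 1 → f y = false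

theorem IsBNN.mem_of_isIsolatedModel {m : ℕ} {f : (Fin m → Bool) → Bool}
    {P N : Finset (Fin m → Bool)} (hPN : IsBNN f P N) {a : Fin m → Bool}
    (ha : IsIsolatedModel f a) : a ∈ P := by
  obtain ⟨b, hbP, hb⟩ := hPN.2.1 a ha.1
  by_contra haP
  obtain ⟨y, hay, hyb⟩ := exists_hammingDist_eq_one_of_ne (ne_of_mem_of_not_mem hbP haP).symm
  obtain ⟨c, hcN, hc⟩ := hPN.2.2 y (ha.2 y hay)
  have : hammingDist a c < hammingDist a c := calc
    hammingDist a c ≤ hammingDist a y + hammingDist y c := hammingDist_triangle a y c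
    _ < hammingDist y b + 1 := by have := hc b hbP; omega
    _ = hammingDist a b := hyb
    _ < hammingDist a c := hb c hcN
  exact lt_irrefl _ this

/-- for f on 2n variables with f(x)=1 iff |x| = n exactly:
every model is isolated, there are exactly C(2n,n) models, and any BNN
representation of f has at least C(2n,n) prototypes. -/
theorem exact_half_weight_bnn_lower_bound (n : ℕ) :
    (∀ x : Fin (2 * n) → Bool, wt x = n →
      ∀ y : Fin (2 * n) → Bool, hammingDist x y = 1 → wt y ≠ n) ∧
    (Finset.univ.filter (fun x : Fin (2 * n) → Bool => wt x = n)).card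
      = Nat.choose (2 * n) n ∧
    (∀ P N : Finset (Fin (2 * n) → Bool),
      IsBNN (fun x => decide (wt x = n)) P N →
      Nat.choose (2 * n) n ≤ P.card + N.card) := by
  have isolated : ∀ x : Fin (2 * n) → Bool, wt x = n →
      ∀ y : Fin (2 * n) → Bool, hammingDist x y = 1 → wt y ≠ n :=
    fun x hx y hxy hy => wt_ne_of_hammingDist_eq_one hxy (hx.trans hy.symm)
  refine ⟨isolated, card_filter_wt_eq _ _, fun P N hPN => ?_⟩
  have models_subset : ({x | wt x = n} : Finset (Fin (2 * n) → Bool)) ⊆ P := fun x hx =>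
    hPN.mem_of_isIsolatedModel
      ⟨by simpa using hx, fun y hxy => by simpa using isolated x (by simpa using hx) y hxy⟩
  calc (2 * n).choose n = #{x : Fin (2 * n) → Bool | wt x = n} := (card_filter_wt_eq _ _).symm
    _ ≤ #P := card_le_card models_subset
    _ ≤ #P + #N := Nat.le_add_right _ _
end
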